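/- Let X : [T₀, T) → [0, ∞) be absolutely continuous and Y : [T₀, T) → [0, ∞) nondecreasing, and suppose d/dt (1 + X(t)) ≤ C h(t) ln(e + Y(t)) (1 + X(t)) for a.e. t, where h ≥ 0 satisfies ∫_{T₀}^{T} h(τ) dτ < σ. Then for all t ∈ [T₀, T), 1 + X(t) ≤ (1 + X(T₀)) (e + Y(t))^{Cσ}. -/

import Mathlib

open MeasureTheory Real

open Set

private lemma aux_inv_one_sub_le_exp {x η : ℝ} (hx0 : 0 ≤ x) (hxη : x ≤ η) (hη : η < 1) :
    (1 - x)⁻¹ ≤ Real.exp (x / (1 - η)) := by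
  have h1η : 0 < 1 - η := by linarith
  have h1x : 0 < 1 - x := by linarith
  have hE : 1 + x / (1 - η) ≤ Real.exp (x / (1 - η)) := by
    linarith [Real.add_one_le_exp (x / (1 - η))]
  refine le_trans ?_ hE
  rw [inv_le_iff_one_le_mul₀ h1x]
  have key : 0 ≤ x * (η - x) := mul_nonneg hx0 (by linarith)
  have hd : x / (1 - η) * (1 - η) = x := div_mul_cancel₀ _ h1η.ne'
  nlinarith [mul_nonneg hx0 (le_of_lt h1x), div_nonneg hx0 (le_of_lt h1η)]

private lemma gronwall_piece {F g : ℝ → ℝ} {a b : ℝ} (hab : a ≤ b)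
    (hFc : ContinuousOn F (Icc a b)) (hF0 : ∀ u ∈ Icc a b, 0 ≤ F u)
    (hgint : IntegrableOn g (Ioc a b))
    (hgpos : ∀ᵐ τ ∂(volume.restrict (Ioc a b)), 0 ≤ g τ)
    (hη : (∫ τ in Ioc a b, g τ) < 1)
    (hineq : ∀ u ∈ Icc a b, F u ≤ F a + ∫ τ in Ioc a u, g τ * F τ) :
    F b ≤ F a / (1 - ∫ τ in Ioc a b, g τ) := by
  set η := ∫ τ in Ioc a b, g τ with hηdef
  have hη0 : 0 ≤ η := integral_nonneg_of_ae hgpos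
  obtain ⟨u, huI, humax⟩ := isCompact_Icc.exists_isMaxOn ⟨a, left_mem_Icc.2 hab⟩ hFc
  set N := F u with hNdef
  have hN0 : 0 ≤ N := hF0 u huI
  have hsub : Ioc a u ⊆ Ioc a b := Ioc_subset_Ioc_right huI.2
  have hsub2 : Ioc a u ⊆ Icc a b := fun τ hτ => Ioc_subset_Icc_self (hsub hτ)
  have hgint' : IntegrableOn g (Ioc a u) := hgint.mono_set hsub
  have hFmeas : AEStronglyMeasurable F (volume.restrict (Ioc a u)) :=
    (hFc.mono hsub2).aestronglyMeasurable measurableSet_Ioc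
  have hgF_meas : AEStronglyMeasurable (fun τ => g τ * F τ) (volume.restrict (Ioc a u)) :=
    hgint'.1.mul hFmeas
  have hgpos' : ∀ᵐ τ ∂(volume.restrict (Ioc a u)), 0 ≤ g τ :=
    ae_restrict_of_ae_restrict_of_subset hsub hgpos
  have hmem : ∀ᵐ τ ∂(volume.restrict (Ioc a u)), τ ∈ Ioc a u :=
    ae_restrict_mem measurableSet_Ioc
  have hbound : ∀ᵐ τ ∂(volume.restrict (Ioc a u)), g τ * F τ ≤ g τ * N := by
    filter_upwards [hgpos', hmem] with τ h1 h2
    exact mul_le_mul_of_nonneg_left (humax (hsub2 h2)) h1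
  have hgFint : IntegrableOn (fun τ => g τ * F τ) (Ioc a u) := by
    refine Integrable.mono (hgint'.norm.const_mul N) hgF_meas ?_
    filter_upwards [hgpos', hmem] with τ h1 h2
    have h3 : 0 ≤ F τ := hF0 τ (hsub2 h2)
    have h4 : F τ ≤ N := humax (hsub2 h2)
    have e1 : ‖g τ * F τ‖ = g τ * F τ := Real.norm_of_nonneg (mul_nonneg h1 h3)
    have e2 : ‖N * ‖g τ‖‖ = N * g τ := by
      rw [Real.norm_eq_abs (g τ), abs_of_nonneg h1, Real.norm_eq_abs,
        abs_of_nonneg (mul_nonneg hN0 h1)]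
    rw [e1, e2]
    nlinarith
  have step : (∫ τ in Ioc a u, g τ * F τ) ≤ N * η := by
    calc (∫ τ in Ioc a u, g τ * F τ) ≤ ∫ τ in Ioc a u, g τ * N :=
          integral_mono_ae hgFint (hgint'.mul_const N) hbound
      _ = (∫ τ in Ioc a u, g τ) * N := integral_mul_const _ _
      _ ≤ η * N := mul_le_mul_of_nonneg_right
          (setIntegral_mono_set hgint hgpos hsub.eventuallyLE) hN0
      _ = N * η := mul_comm _ _
  have hNle : N ≤ F a + N * η := le_trans (hineq u huI) (by linarith)
  have h1η : 0 < 1 - η := by linarith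
  have : N ≤ F a / (1 - η) := by rw [le_div_iff₀ h1η]; nlinarith
  exact le_trans (humax (right_mem_Icc.2 hab)) this

set_option maxHeartbeats 1600000 in
/-- Logarithmic Gronwall lemma: if `X : [T₀,T) → [0,∞)` is absolutely continuous (written
via the fundamental theorem of calculus with density `X'`), `Y : [T₀,T) → [0,∞)` is
nondecreasing, `d/dt (1 + X) ≤ C h ln(e + Y)(1 + X)` a.e. with `h ≥ 0` and
`∫_{T₀}^{T} h < σ`, then for all `t ∈ [T₀,T)`,
`1 + X(t) ≤ (1 + X(T₀)) (e + Y(t))^{Cσ}`. -/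
theorem gronwall_logarithmic (T₀ T C σ : ℝ) (hT : T₀ < T) (hC : 0 < C) (hσ : 0 < σ)
    (X X' Y h : ℝ → ℝ)
    (hXpos : ∀ t ∈ Set.Ico T₀ T, 0 ≤ X t)
    (hYpos : ∀ t ∈ Set.Ico T₀ T, 0 ≤ Y t)
    (hYmono : MonotoneOn Y (Set.Ico T₀ T))
    (hAC : ∀ t ∈ Set.Ico T₀ T, X t = X T₀ + ∫ τ in T₀..t, X' τ)
    (hX'int : ∀ t ∈ Set.Ico T₀ T, IntervalIntegrable X' volume T₀ t)
    (hhpos : ∀ t ∈ Set.Ico T₀ T, 0 ≤ h t)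
    (hhint : IntegrableOn h (Set.Ico T₀ T) volume)
    (hhσ : (∫ τ in Set.Ico T₀ T, h τ) < σ)
    (hode : ∀ᵐ t ∂(volume.restrict (Set.Ico T₀ T)),
      X' t ≤ C * h t * Real.log (Real.exp 1 + Y t) * (1 + X t)) :
    ∀ t ∈ Set.Ico T₀ T,
      1 + X t ≤ (1 + X T₀) * (Real.exp 1 + Y t) ^ (C * σ) := by
  intro t htmem
  obtain ⟨ht0, htT⟩ := htmem
  have htmem : t ∈ Set.Ico T₀ T := ⟨ht0, htT⟩
  have he1 := Real.exp_pos 1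
  set L := Real.log (Real.exp 1 + Y t) with hLdef
  have hYt : 0 ≤ Y t := hYpos t htmem
  have heY : (0:ℝ) < Real.exp 1 + Y t := by linarith
  have hL1 : 1 ≤ L := by
    rw [hLdef]
    calc (1:ℝ) = Real.log (Real.exp 1) := (Real.log_exp 1).symm
      _ ≤ _ := Real.log_le_log he1 (by linarith)
  set K := C * L with hKdef
  have hK : 0 < K := mul_pos hC (by linarith)
  set g : ℝ → ℝ := fun τ => K * h τ with hgdef
  set δ := 1 + X T₀ with hδdef
  have hδ1 : 1 ≤ δ := by
    have := hXpos T₀ ⟨le_rfl, hT⟩; rw [hδdef]; linarith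
  set I := ∫ τ in Set.Ico T₀ T, h τ with hIdef
  have hInn : 0 ≤ I := setIntegral_nonneg measurableSet_Ico hhpos
  set η := (σ - I) / (2 * σ) with hηdef
  have hηpos : 0 < η := div_pos (by linarith) (by linarith)
  have hηlt : η < 1 := by rw [hηdef, div_lt_one (by linarith)]; linarith
  have h1η : 0 < 1 - η := by linarith
  have hIccsub : Set.Icc T₀ t ⊆ Set.Ico T₀ T := fun s hs => ⟨hs.1, lt_of_le_of_lt hs.2 htT⟩
  -- continuity of 1 + X on [T₀, t]
  have hFc : ContinuousOn (fun s => 1 + X s) (Set.Icc T₀ t) := by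
    have hprim : ContinuousOn (fun s => 1 + (X T₀ + ∫ τ in T₀..s, X' τ)) (Set.Icc T₀ t) := by
      refine continuousOn_const.add (continuousOn_const.add ?_)
      have hint : IntegrableOn X' (Set.uIcc T₀ t) := by
        rw [Set.uIcc_of_le ht0, integrableOn_Icc_iff_integrableOn_Ioc]
        exact (intervalIntegrable_iff_integrableOn_Ioc_of_le ht0).1 (hX'int t htmem)
      have := intervalIntegral.continuousOn_primitive_interval (a := T₀) (b := t)
        (μ := volume) hint
      rwa [Set.uIcc_of_le ht0] at this
    refine hprim.congr fun s hs => ?_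
    rw [hAC s (hIccsub hs)]
  -- integrability helpers
  have hhIoc : ∀ {a u : ℝ}, T₀ ≤ a → u ≤ t → IntegrableOn h (Set.Ioc a u) := by
    intro a u ha hu
    exact hhint.mono_set fun τ hτ => hIccsub ⟨le_trans ha hτ.1.le, le_trans hτ.2 hu⟩
  obtain ⟨w, hwI, hwmax⟩ := isCompact_Icc.exists_isMaxOn ⟨T₀, Set.left_mem_Icc.2 ht0⟩ hFc
  set B := 1 + X w with hBdef
  have hB0 : 0 ≤ B := by
    have := hXpos w (hIccsub hwI); rw [hBdef]; linarith
  have hgFint : ∀ {a u : ℝ}, T₀ ≤ a → a ≤ u → u ≤ t →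
      IntegrableOn (fun τ => g τ * (1 + X τ)) (Set.Ioc a u) := by
    intro a u ha hau hu
    have hsub : Set.Ioc a u ⊆ Set.Icc T₀ t := fun τ hτ =>
      ⟨le_trans ha hτ.1.le, le_trans hτ.2 hu⟩
    have hmeasF : AEStronglyMeasurable (fun τ => 1 + X τ) (volume.restrict (Set.Ioc a u)) :=
      (hFc.mono hsub).aestronglyMeasurable measurableSet_Ioc
    have hg1 : IntegrableOn g (Set.Ioc a u) := (hhIoc ha hu).const_mul K
    refine Integrable.mono (((hhIoc ha hu).norm).const_mul (K * B)) (hg1.1.mul hmeasF) ?_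
    filter_upwards [ae_restrict_mem measurableSet_Ioc] with τ hτ
    have h1 : 0 ≤ h τ := hhpos τ (hIccsub (hsub hτ))
    have h2 : 0 ≤ X τ := hXpos τ (hIccsub (hsub hτ))
    have h3 : 1 + X τ ≤ B := hwmax (hsub hτ)
    have e1 : ‖g τ * (1 + X τ)‖ = K * h τ * (1 + X τ) :=
      Real.norm_of_nonneg (mul_nonneg (mul_nonneg hK.le h1) (by linarith))
    have e2 : ‖K * B * ‖h τ‖‖ = K * B * h τ := by
      rw [Real.norm_eq_abs (h τ), abs_of_nonneg h1,
        Real.norm_of_nonneg (mul_nonneg (mul_nonneg hK.le hB0) h1)]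
    rw [e1, e2]
    nlinarith [mul_nonneg (mul_nonneg hK.le h1) (by linarith : (0:ℝ) ≤ B - (1 + X τ))]
  -- key integral inequality
  have keyineq : ∀ a, T₀ ≤ a → ∀ u ∈ Set.Icc a t,
      1 + X u ≤ (1 + X a) + ∫ τ in Set.Ioc a u, g τ * (1 + X τ) := by
    intro a ha u hu
    obtain ⟨hau, hut⟩ := hu
    have hamem : a ∈ Set.Ico T₀ T := hIccsub ⟨ha, le_trans hau hut⟩
    have humem : u ∈ Set.Ico T₀ T := hIccsub ⟨le_trans ha hau, hut⟩
    have hint_au : IntervalIntegrable X' volume a u := by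
      refine (hX'int u humem).mono_set ?_
      rw [Set.uIcc_of_le hau, Set.uIcc_of_le (le_trans ha hau)]
      exact Set.Icc_subset_Icc ha le_rfl
    have hadd : (∫ τ in T₀..a, X' τ) + ∫ τ in a..u, X' τ = ∫ τ in T₀..u, X' τ :=
      intervalIntegral.integral_add_adjacent_intervals (hX'int a hamem) hint_au
    have hXdiff : X u = X a + ∫ τ in a..u, X' τ := by
      rw [hAC u humem, hAC a hamem]; linarith
    have hXiIoc : (∫ τ in a..u, X' τ) = ∫ τ in Set.Ioc a u, X' τ :=
      intervalIntegral.integral_of_le hau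
    have hsub : Set.Ioc a u ⊆ Set.Ico T₀ T := fun τ hτ =>
      hIccsub ⟨le_trans ha hτ.1.le, le_trans hτ.2 hut⟩
    have hmono : (∫ τ in Set.Ioc a u, X' τ) ≤ ∫ τ in Set.Ioc a u, g τ * (1 + X τ) := by
      refine integral_mono_ae ((intervalIntegrable_iff_integrableOn_Ioc_of_le hau).1 hint_au)
        (hgFint ha hau hut) ?_
      have hode' := ae_restrict_of_ae_restrict_of_subset hsub hode
      filter_upwards [hode', ae_restrict_mem measurableSet_Ioc] with τ hτ1 hτ2
      have hτmem : τ ∈ Set.Ico T₀ T := hsub hτ2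
      have h1 : 0 ≤ h τ := hhpos τ hτmem
      have h2 : 0 ≤ 1 + X τ := by linarith [hXpos τ hτmem]
      have hYτ : Y τ ≤ Y t := hYmono hτmem htmem (le_trans hτ2.2 hut)
      have hlog : Real.log (Real.exp 1 + Y τ) ≤ L := by
        rw [hLdef]
        exact Real.log_le_log (by linarith [hYpos τ hτmem]) (by linarith)
      calc X' τ ≤ C * h τ * Real.log (Real.exp 1 + Y τ) * (1 + X τ) := hτ1
        _ ≤ C * h τ * L * (1 + X τ) := by
            nlinarith [mul_nonneg (mul_nonneg (mul_nonneg hC.le h1) h2) (sub_nonneg.2 hlog)]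
        _ = g τ * (1 + X τ) := by rw [hgdef, hKdef]; ring
    rw [hXiIoc] at hXdiff
    linarith
  -- absolute continuity of the integral of h
  have hfin : (∫⁻ τ, (‖h τ‖₊ : ENNReal) ∂(volume.restrict (Set.Ico T₀ T))) ≠ ⊤ :=
    hhint.2.ne
  obtain ⟨d, hd0, hdp⟩ := exists_pos_setLIntegral_lt_of_measure_lt
    (μ := volume.restrict (Set.Ico T₀ T)) hfin
    (ε := ENNReal.ofReal (η / K)) (ENNReal.ofReal_pos.2 (div_pos hηpos hK)).ne'
  set r := min d 1 with hrdef
  have hr0 : 0 < r := lt_min hd0 zero_lt_one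
  have hrne : r ≠ ⊤ := ne_top_of_le_ne_top ENNReal.one_ne_top (min_le_right _ _)
  have hrt0 : 0 < r.toReal := ENNReal.toReal_pos hr0.ne' hrne
  obtain ⟨n, hn⟩ := exists_nat_gt ((t - T₀) / r.toReal)
  have hn0 : 0 < (n:ℝ) := lt_of_le_of_lt (div_nonneg (by linarith) hrt0.le) hn
  set Δ := (t - T₀) / n with hΔdef
  have hΔ0 : 0 ≤ Δ := div_nonneg (by linarith) hn0.le
  have hΔr : Δ < r.toReal := by
    rw [hΔdef, div_lt_iff₀ hn0]
    calc t - T₀ = (t - T₀) / r.toReal * r.toReal := (div_mul_cancel₀ _ hrt0.ne').symm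
      _ < n * r.toReal := by exact mul_lt_mul_of_pos_right hn hrt0
      _ = r.toReal * n := mul_comm _ _
  have hsmall : ∀ a u, T₀ ≤ a → a ≤ u → u ≤ t → u - a ≤ Δ →
      (∫ τ in Set.Ioc a u, g τ) ≤ η := by
    intro a u ha hau hut hlen
    have hsub : Set.Ioc a u ⊆ Set.Ico T₀ T := fun τ hτ =>
      hIccsub ⟨le_trans ha hτ.1.le, le_trans hτ.2 hut⟩
    have hμ : (volume.restrict (Set.Ico T₀ T)) (Set.Ioc a u) < d := by
      rw [Measure.restrict_apply measurableSet_Ioc]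
      calc volume (Set.Ioc a u ∩ Set.Ico T₀ T) ≤ volume (Set.Ioc a u) :=
            measure_mono Set.inter_subset_left
        _ = ENNReal.ofReal (u - a) := Real.volume_Ioc
        _ < r := by
            rw [← ENNReal.ofReal_toReal hrne]
            exact (ENNReal.ofReal_lt_ofReal_iff hrt0).2 (lt_of_le_of_lt hlen hΔr)
        _ ≤ d := min_le_left _ _
    have hlint := hdp _ hμ
    rw [Measure.restrict_restrict measurableSet_Ioc,
      Set.inter_eq_self_of_subset_left hsub] at hlint
    have hint : (∫ τ in Set.Ioc a u, h τ) ≤ η / K := by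
      have h2 := norm_integral_le_lintegral_norm (μ := volume.restrict (Set.Ioc a u)) h
      have h3 : (∫⁻ τ, ENNReal.ofReal ‖h τ‖ ∂(volume.restrict (Set.Ioc a u)))
          ≤ ENNReal.ofReal (η / K) := by
        calc (∫⁻ τ, ENNReal.ofReal ‖h τ‖ ∂(volume.restrict (Set.Ioc a u)))
            = ∫⁻ τ, (‖h τ‖₊ : ENNReal) ∂(volume.restrict (Set.Ioc a u)) := by
              simp_rw [ofReal_norm, enorm_eq_nnnorm]
          _ ≤ ENNReal.ofReal (η / K) := hlint.le
      have h4 : (∫⁻ τ, ENNReal.ofReal ‖h τ‖ ∂(volume.restrict (Set.Ioc a u))).toReal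
          ≤ η / K := ENNReal.toReal_le_of_le_ofReal (div_nonneg hηpos.le hK.le) h3
      calc (∫ τ in Set.Ioc a u, h τ) ≤ ‖∫ τ in Set.Ioc a u, h τ‖ := le_abs_self _
        _ ≤ _ := h2
        _ ≤ η / K := h4
    have heq : (∫ τ in Set.Ioc a u, g τ) = K * ∫ τ in Set.Ioc a u, h τ := by
      rw [hgdef]; exact integral_const_mul K h
    rw [heq]
    calc K * ∫ τ in Set.Ioc a u, h τ ≤ K * (η / K) :=
          mul_le_mul_of_nonneg_left hint hK.le
      _ = η := mul_div_cancel₀ _ hK.ne'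
  -- the partition
  set s : ℕ → ℝ := fun i => T₀ + i * Δ with hsdef
  have hs0 : s 0 = T₀ := by simp [hsdef]
  have hsn : s n = t := by
    simp only [hsdef, hΔdef]; field_simp; ring
  have hstep : ∀ i : ℕ, s (i + 1) - s i = Δ := by
    intro i; simp only [hsdef]; push_cast; ring
  have hsmono : ∀ i : ℕ, s i ≤ s (i + 1) := fun i => by linarith [hstep i]
  have hsbound : ∀ i : ℕ, i ≤ n → T₀ ≤ s i ∧ s i ≤ t := by
    intro i hi
    constructor
    · simp only [hsdef]
      exact le_add_of_nonneg_right (mul_nonneg (Nat.cast_nonneg i) hΔ0)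
    · rw [← hsn]; simp only [hsdef]
      exact (add_le_add_iff_left T₀).2 (mul_le_mul_of_nonneg_right (Nat.cast_le.2 hi) hΔ0)
  -- main induction
  have main : ∀ i, i ≤ n →
      1 + X (s i) ≤ δ * Real.exp ((∫ τ in Set.Ioc T₀ (s i), g τ) / (1 - η)) := by
    intro i
    induction i with
    | zero =>
      intro _
      rw [hs0]
      simp [Set.Ioc_self, hδdef]
    | succ i ih =>
      intro hin
      have hi : i ≤ n := Nat.le_of_succ_le hin
      have IH := ih hi
      obtain ⟨hT₀si, hsit⟩ := hsbound i hi
      obtain ⟨hT₀si1, hsi1t⟩ := hsbound (i + 1) hin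
      set ηi := ∫ τ in Set.Ioc (s i) (s (i + 1)), g τ with hηidef
      have hηiη : ηi ≤ η := hsmall _ _ hT₀si (hsmono i) hsi1t (le_of_eq (hstep i))
      have hgpos_i : ∀ᵐ τ ∂(volume.restrict (Set.Ioc (s i) (s (i + 1)))), 0 ≤ g τ := by
        filter_upwards [ae_restrict_mem measurableSet_Ioc] with τ hτ
        have : τ ∈ Set.Ico T₀ T := hIccsub ⟨le_trans hT₀si hτ.1.le, le_trans hτ.2 hsi1t⟩
        exact mul_nonneg hK.le (hhpos τ this)
      have hηi0 : 0 ≤ ηi := integral_nonneg_of_ae hgpos_i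
      have hsubIcc : Set.Icc (s i) (s (i + 1)) ⊆ Set.Icc T₀ t :=
        Set.Icc_subset_Icc hT₀si hsi1t
      have hpc := gronwall_piece (F := fun u => 1 + X u) (hsmono i)
        (hFc.mono hsubIcc)
        (fun u hu => by
          show (0:ℝ) ≤ 1 + X u
          linarith [hXpos u (hIccsub (hsubIcc hu))])
        ((hhIoc hT₀si hsi1t).const_mul K) hgpos_i
        (lt_of_le_of_lt hηiη hηlt)
        (fun u hu => keyineq (s i) hT₀si u ⟨hu.1, le_trans hu.2 hsi1t⟩)
      have hexp := aux_inv_one_sub_le_exp hηi0 hηiη hηlt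
      have hFsi : 0 ≤ 1 + X (s i) := by
        linarith [hXpos (s i) (hIccsub ⟨hT₀si, hsit⟩)]
      have hadj : (∫ τ in Set.Ioc T₀ (s (i + 1)), g τ)
          = (∫ τ in Set.Ioc T₀ (s i), g τ) + ηi := by
        rw [hηidef, ← setIntegral_union (Set.Ioc_disjoint_Ioc_of_le le_rfl) measurableSet_Ioc
          ((hhIoc le_rfl hsit).const_mul K) ((hhIoc hT₀si hsi1t).const_mul K),
          Set.Ioc_union_Ioc_eq_Ioc hT₀si (hsmono i)]
      calc 1 + X (s (i + 1)) ≤ (1 + X (s i)) / (1 - ηi) := hpc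
        _ = (1 + X (s i)) * (1 - ηi)⁻¹ := div_eq_mul_inv _ _
        _ ≤ (1 + X (s i)) * Real.exp (ηi / (1 - η)) :=
            mul_le_mul_of_nonneg_left hexp hFsi
        _ ≤ δ * Real.exp ((∫ τ in Set.Ioc T₀ (s i), g τ) / (1 - η))
              * Real.exp (ηi / (1 - η)) :=
            mul_le_mul_of_nonneg_right IH (Real.exp_nonneg _)
        _ = δ * Real.exp (((∫ τ in Set.Ioc T₀ (s i), g τ) + ηi) / (1 - η)) := by
            rw [mul_assoc, ← Real.exp_add, ← add_div]
        _ = _ := by rw [hadj]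
  -- conclude
  have hfinal := main n le_rfl
  rw [hsn] at hfinal
  have hae : 0 ≤ᵐ[volume.restrict (Set.Ico T₀ T)] h := by
    filter_upwards [ae_restrict_mem measurableSet_Ico] with τ hτ
    exact hhpos τ hτ
  have hGle : (∫ τ in Set.Ioc T₀ t, g τ) ≤ K * I := by
    have heq : (∫ τ in Set.Ioc T₀ t, g τ) = K * ∫ τ in Set.Ioc T₀ t, h τ := by
      rw [hgdef]; exact integral_const_mul K h
    rw [heq, hIdef]
    refine mul_le_mul_of_nonneg_left ?_ hK.le
    refine setIntegral_mono_set hhint hae ?_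
    have hsub2 : Set.Ioc T₀ t ⊆ Set.Ico T₀ T :=
      fun τ hτ => ⟨le_of_lt hτ.1, lt_of_le_of_lt hτ.2 htT⟩
    exact hsub2.eventuallyLE
  have hIη : I / (1 - η) ≤ σ := by
    rw [div_le_iff₀ h1η]
    have hησ : η * σ = (σ - I) / 2 := by
      rw [hηdef]; field_simp
    have hexpand : σ * (1 - η) = σ - η * σ := by ring
    rw [hexpand, hησ]
    linarith
  have hexp_le : (∫ τ in Set.Ioc T₀ t, g τ) / (1 - η) ≤ L * (C * σ) := by
    calc (∫ τ in Set.Ioc T₀ t, g τ) / (1 - η) ≤ K * I / (1 - η) :=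
          (div_le_div_iff_of_pos_right h1η).2 hGle
      _ = K * (I / (1 - η)) := mul_div_assoc _ _ _
      _ ≤ K * σ := mul_le_mul_of_nonneg_left hIη hK.le
      _ = L * (C * σ) := by rw [hKdef]; ring
  have hrpow : (Real.exp 1 + Y t) ^ (C * σ) = Real.exp (L * (C * σ)) := by
    rw [Real.rpow_def_of_pos heY]
  calc 1 + X t ≤ δ * Real.exp ((∫ τ in Set.Ioc T₀ t, g τ) / (1 - η)) := hfinal
    _ ≤ δ * Real.exp (L * (C * σ)) :=
        mul_le_mul_of_nonneg_left (Real.exp_le_exp.2 hexp_le) (by linarith)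
    _ = (1 + X T₀) * (Real.exp 1 + Y t) ^ (C * σ) := by rw [hrpow, hδdef]
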